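/- arXiv:1909.07814 — 3 statements merged into one kernel-verified Lean document; each statement's English description precedes it below -/
import Mathlib

section
/- For all natural numbers m, f, i, o, ℓ with 1 ≤ f ≤ m, setting q = m − f + 1, the Porthos communication cost for a convolutional layer satisfies (2·m²·i + 2·f²·o·i + q²·o)·ℓ ≤ (2·q²·f²·i + 2·f²·o·i + q²·o)·ℓ, where the right-hand side is the SecureNN communication cost. That is, Porthos never communicates more than SecureNN for any convolutional layer. -/
/-- Porthos communicates at most as much as SecureNN on any convolutional
layer `Conv2d_{m,i,f,o}` over `Z_{2^ℓ}`:
`(2m²i + 2f²oi + q²o)·ℓ ≤ (2q²f²i + 2f²oi + q²o)·ℓ` where `q = m - f + 1`. -/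
theorem porthos_comm_le_securenn (m f i o ℓ q : ℕ) (hf : 1 ≤ f) (hfm : f ≤ m)
    (hq : q = m - f + 1) :
    (2 * m ^ 2 * i + 2 * f ^ 2 * o * i + q ^ 2 * o) * ℓ ≤
      (2 * q ^ 2 * f ^ 2 * i + 2 * f ^ 2 * o * i + q ^ 2 * o) * ℓ := by
  obtain ⟨d, rfl⟩ := Nat.exists_eq_add_of_le hfm
  have hq' : q = d + 1 := by omega
  subst hq'
  have key : f + d ≤ (d + 1) * f := by nlinarith
  have h2 : (f + d) ^ 2 ≤ ((d + 1) * f) ^ 2 := Nat.pow_le_pow_left key 2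
  have : 2 * (f + d) ^ 2 * i ≤ 2 * (d + 1) ^ 2 * f ^ 2 * i := by nlinarith
  nlinarith
end

section
/- Let R be a commutative ring, let X be an m×m matrix and Y an f×f matrix over R with 1 ≤ f ≤ m, and let q = m − f + 1. Then ReshapeOutput(ReshapeInput(X) · ReshapeFilter(Y)) = Conv2d_{m,f}(X, Y). Equivalently, for all 0 ≤ i, j ≤ q − 1, the (i·q + j)-th entry of the column vector ReshapeInput(X) · ReshapeFilter(Y) equals Σ_{k=0}^{f−1} Σ_{l=0}^{f−1} X[i+k][j+l] · Y[k][l]. -/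
/-- `Conv2d_{m,f}(X,Y)`: the `q×q` matrix with `(i,j)` entry
`Σ_{k<f} Σ_{l<f} X[i+k][j+l] · Y[k][l]` (stride 1, no padding),
where `q + f = m + 1` (i.e. `q = m - f + 1`). -/
def conv2d {R : Type*} [CommRing R] {m f q : ℕ} (h : q + f = m + 1)
    (X : Matrix (Fin m) (Fin m) R) (Y : Matrix (Fin f) (Fin f) R) :
    Matrix (Fin q) (Fin q) R :=
  Matrix.of fun i j => ∑ k : Fin f, ∑ l : Fin f,
    X ⟨i.val + k.val, by have := i.isLt; have := k.isLt; omega⟩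
      ⟨j.val + l.val, by have := j.isLt; have := l.isLt; omega⟩ * Y k l

/-- `ReshapeInput(X)`: the `q²×f²` matrix whose `(i·q+j, k·f+l)` entry is
`X[i+k][j+l]`. -/
def reshapeInput {R : Type*} {m f q : ℕ} (h : q + f = m + 1)
    (X : Matrix (Fin m) (Fin m) R) : Matrix (Fin (q * q)) (Fin (f * f)) R :=
  Matrix.of fun rc cc =>
    X ⟨rc.val / q + cc.val / f, by
        have hr := rc.isLt; have hc := cc.isLt
        have hq0 : 0 < q := Nat.pos_of_ne_zero (fun h0 => by
          have hqq : 0 < q * q := lt_of_le_of_lt (Nat.zero_le _) hr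
          rw [h0] at hqq; omega)
        have hf0 : 0 < f := Nat.pos_of_ne_zero (fun h0 => by
          have hff : 0 < f * f := lt_of_le_of_lt (Nat.zero_le _) hc
          rw [h0] at hff; omega)
        have h1 : rc.val / q < q := (Nat.div_lt_iff_lt_mul hq0).mpr hr
        have h2 : cc.val / f < f := (Nat.div_lt_iff_lt_mul hf0).mpr hc
        omega⟩
      ⟨rc.val % q + cc.val % f, by
        have hr := rc.isLt; have hc := cc.isLt
        have hq0 : 0 < q := Nat.pos_of_ne_zero (fun h0 => by
          have hqq : 0 < q * q := lt_of_le_of_lt (Nat.zero_le _) hr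
          rw [h0] at hqq; omega)
        have hf0 : 0 < f := Nat.pos_of_ne_zero (fun h0 => by
          have hff : 0 < f * f := lt_of_le_of_lt (Nat.zero_le _) hc
          rw [h0] at hff; omega)
        have h1 : rc.val % q < q := Nat.mod_lt _ hq0
        have h2 : cc.val % f < f := Nat.mod_lt _ hf0
        omega⟩

/-- `ReshapeFilter(Y)`: the `f²×1` column vector whose `(k·f+l)`-th entry is
`Y[k][l]`. -/
def reshapeFilter {R : Type*} {f : ℕ}
    (Y : Matrix (Fin f) (Fin f) R) : Matrix (Fin (f * f)) (Fin 1) R :=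
  Matrix.of fun c _ =>
    Y ⟨c.val / f, by
        have hc := c.isLt
        have hf0 : 0 < f := Nat.pos_of_ne_zero (fun h0 => by
          have hff : 0 < f * f := lt_of_le_of_lt (Nat.zero_le _) hc
          rw [h0] at hff; omega)
        exact (Nat.div_lt_iff_lt_mul hf0).mpr hc⟩
      ⟨c.val % f, by
        have hc := c.isLt
        have hf0 : 0 < f := Nat.pos_of_ne_zero (fun h0 => by
          have hff : 0 < f * f := lt_of_le_of_lt (Nat.zero_le _) hc
          rw [h0] at hff; omega)
        exact Nat.mod_lt _ hf0⟩

/-- `ReshapeOutput(Z')`: the `q×q` matrix whose `(i,j)` entry is the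
`(i·q+j)`-th entry of the `q²×1` column vector `Z'`. -/
def reshapeOutput {R : Type*} {q : ℕ}
    (Z : Matrix (Fin (q * q)) (Fin 1) R) : Matrix (Fin q) (Fin q) R :=
  Matrix.of fun i j =>
    Z ⟨i.val * q + j.val, by
        have hi := i.isLt; have hj := j.isLt
        calc i.val * q + j.val < i.val * q + q := by omega
          _ = (i.val + 1) * q := by ring
          _ ≤ q * q := Nat.mul_le_mul_right q hi
      ⟩ 0

/-- Correctness of the reshaping reduction of convolution to matrix
multiplication: `ReshapeOutput(ReshapeInput(X) · ReshapeFilter(Y)) =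
Conv2d_{m,f}(X, Y)`. -/
theorem reshape_mul_eq_conv2d {R : Type*} [CommRing R] {m f q : ℕ}
    (hf : 1 ≤ f) (hfm : f ≤ m) (hq : q = m - f + 1)
    (X : Matrix (Fin m) (Fin m) R) (Y : Matrix (Fin f) (Fin f) R) :
    reshapeOutput (reshapeInput (show q + f = m + 1 by omega) X * reshapeFilter Y) =
      conv2d (show q + f = m + 1 by omega) X Y := by

  have hq0 : 0 < q := by omega
  have hf0 : 0 < f := hf
  ext i j
  simp only [reshapeOutput, conv2d, Matrix.mul_apply, Matrix.of_apply]
  rw [← Equiv.sum_comp finProdFinEquiv, Fintype.sum_prod_type]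
  refine Finset.sum_congr rfl fun k _ => Finset.sum_congr rfl fun l _ => ?_
  have hc : ((finProdFinEquiv (k, l) : Fin (f * f)) : ℕ) = l.val + f * k.val := rfl
  have hrd : (i.val * q + j.val) / q = i.val := by
    rw [Nat.add_comm, Nat.add_mul_div_right _ _ hq0, Nat.div_eq_of_lt j.isLt, Nat.zero_add]
  have hrm : (i.val * q + j.val) % q = j.val := by
    rw [Nat.add_comm, Nat.add_mul_mod_self_right, Nat.mod_eq_of_lt j.isLt]
  have hcd : (l.val + f * k.val) / f = k.val := by
    rw [Nat.add_mul_div_left _ _ hf0, Nat.div_eq_of_lt l.isLt, Nat.zero_add]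
  have hcm : (l.val + f * k.val) % f = l.val := by
    rw [Nat.add_mul_mod_self_left, Nat.mod_eq_of_lt l.isLt]
  simp only [reshapeInput, reshapeFilter, Matrix.of_apply]
  congr 1
  · congr 1 <;> apply Fin.ext <;> simp [hc, hrd, hrm, hcd, hcm]
  · congr 1 <;> apply Fin.ext <;> simp [hc, hcd, hcm]
end

section
/- Fixed-point multiplication with scale-down accuracy: for all real numbers r₁, r₂ and every natural number s, |⌊(⌊r₁·2^s⌋ · ⌊r₂·2^s⌋) / 2^s⌋ / 2^s − r₁·r₂| ≤ (|r₁| + |r₂| + 1)/2^s + 1/2^{2s}, where ⌊·⌋ denotes the integer floor (so the inner expression is the arithmetic right shift by s of the integer product of the two fixed-point encodings). That is, the fixed-point product followed by a ScaleDown by s, interpreted at scale s, approximates the true real product r₁·r₂ with error at most (|r₁| + |r₂| + 1)/2^s + 1/2^{2s}. -/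
/-- Fixed-point multiplication followed by `ScaleDown` (arithmetic right shift
by `s`, i.e. floor division by `2^s`), interpreted at scale `s`, approximates
`r₁·r₂` with error at most `(|r₁| + |r₂| + 1)/2^s + 1/2^(2s)`. -/
theorem fixed_point_mul_scaledown_accuracy (r₁ r₂ : ℝ) (s : ℕ) :
    |((⌊((⌊r₁ * 2 ^ s⌋ * ⌊r₂ * 2 ^ s⌋ : ℤ) : ℝ) / 2 ^ s⌋ : ℤ) : ℝ) / 2 ^ s
        - r₁ * r₂| ≤
      (|r₁| + |r₂| + 1) / 2 ^ s + 1 / 2 ^ (2 * s) := by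
  set P : ℝ := 2 ^ s with hP
  have hP0 : (0:ℝ) < P := by positivity
  have hP1 : (1:ℝ) ≤ P := one_le_pow₀ (by norm_num)
  set A : ℝ := ((⌊r₁ * 2 ^ s⌋ : ℤ) : ℝ) with hA
  set B : ℝ := ((⌊r₂ * 2 ^ s⌋ : ℤ) : ℝ) with hB
  have hXeq : ((⌊r₁ * 2 ^ s⌋ * ⌊r₂ * 2 ^ s⌋ : ℤ) : ℝ) / 2 ^ s = A * B / P := by
    push_cast; ring
  rw [hXeq]
  set C : ℝ := ((⌊A * B / P⌋ : ℤ) : ℝ) with hC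
  have ha1 : A ≤ r₁ * P := Int.floor_le _
  have ha2 : r₁ * P - 1 < A := Int.sub_one_lt_floor _
  have hb1 : B ≤ r₂ * P := Int.floor_le _
  have hb2 : r₂ * P - 1 < B := Int.sub_one_lt_floor _
  have hc1 : C ≤ A * B / P := Int.floor_le _
  have hc2 : A * B / P - 1 < C := Int.sub_one_lt_floor _
  have hc1' : C * P ≤ A * B := by
    have h := mul_le_mul_of_nonneg_right hc1 hP0.le
    rwa [div_mul_cancel₀ _ hP0.ne'] at h
  have hc2' : A * B - P < C * P := by
    have h := mul_lt_mul_of_pos_right hc2 hP0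
    rw [sub_mul, div_mul_cancel₀ _ hP0.ne', one_mul] at h
    linarith
  have hr1 : -|r₁| ≤ r₁ := neg_abs_le r₁
  have hr1' : r₁ ≤ |r₁| := le_abs_self r₁
  have hr2 : -|r₂| ≤ r₂ := neg_abs_le r₂
  have hr2' : r₂ ≤ |r₂| := le_abs_self r₂
  have hAabs : |A| ≤ |r₁| * P + 1 := by
    rw [abs_le]
    constructor <;> nlinarith
  have hmid : |A * B - r₁ * r₂ * (P * P)| ≤ (|r₁| + |r₂|) * P + 1 := by
    have key : A * B - r₁ * r₂ * (P * P) = A * (B - r₂ * P) + (r₂ * P) * (A - r₁ * P) := by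
      ring
    rw [key]
    have hBd : |B - r₂ * P| ≤ 1 := abs_le.mpr ⟨by linarith, by linarith⟩
    have hAd : |A - r₁ * P| ≤ 1 := abs_le.mpr ⟨by linarith, by linarith⟩
    have t1 : |A * (B - r₂ * P)| ≤ (|r₁| * P + 1) * 1 := by
      rw [abs_mul]
      exact mul_le_mul hAabs hBd (abs_nonneg _) (by positivity)
    have t2 : |(r₂ * P) * (A - r₁ * P)| ≤ (|r₂| * P) * 1 := by
      rw [abs_mul, abs_mul, abs_of_pos hP0]
      exact mul_le_mul_of_nonneg_left hAd (by positivity)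
    calc |A * (B - r₂ * P) + (r₂ * P) * (A - r₁ * P)|
        ≤ |A * (B - r₂ * P)| + |(r₂ * P) * (A - r₁ * P)| := abs_add_le _ _
      _ ≤ (|r₁| * P + 1) * 1 + (|r₂| * P) * 1 := by linarith
      _ = (|r₁| + |r₂|) * P + 1 := by ring
  rw [abs_le] at hmid
  have key₁ : C * P - r₁ * r₂ * (P * P) ≤ (|r₁| + |r₂| + 1) * P + 1 := by nlinarith
  have key₂ : -((|r₁| + |r₂| + 1) * P + 1) ≤ C * P - r₁ * r₂ * (P * P) := by nlinarith
  have e1 : C / P - r₁ * r₂ = (C * P - r₁ * r₂ * (P * P)) / (P * P) := by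
    field_simp
  have e2 : (|r₁| + |r₂| + 1) / P + 1 / 2 ^ (2 * s)
      = ((|r₁| + |r₂| + 1) * P + 1) / (P * P) := by
    have h22 : (2:ℝ) ^ (2 * s) = P * P := by rw [hP, two_mul, pow_add]
    rw [h22]; field_simp
  rw [e1, e2, abs_div, abs_of_pos (by positivity : (0:ℝ) < P * P)]
  gcongr
  exact abs_le.mpr ⟨key₂, key₁⟩
end
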